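/- Let X, X2, …, Xν be independent and identically distributed non-negative random variables with continuous distribution function F, survival function F̄ = 1 − F, and finite mean, where ν ≥ 2 is an integer, and let h(y1, …, yν) = (y1 + ⋯ + yν − ν min(y1, …, yν))/ν. Then for every x ≥ 0: E[h(x, X2, …, Xν)] = (1/ν) ( x(1 − ν F̄(x)^{ν−1}) − ν(ν−1) ∫_0^x y F̄(y)^{ν−2} dF(y) ) + ((ν−1)/ν) E(X). -/

import Mathlib

/-!
Write `h(x, Y) = (x + ∑ Yᵢ)/ν - min(x, M)` with `M = min Yᵢ`. The first part has mean
`(x + (ν-1) E X)/ν`. By independence `P(M > t) = F̄(t)^(ν-1)`, so the layer-cake formula gives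
`E min(x, M) = ∫₀ˣ F̄(t)^(ν-1) dt`. For continuous `F` one has `d(F̄^(k+1)) = -(k+1) F̄^k dF`;
this is proved by induction on `k`, each step being Fubini over the triangle `{y < z}`.
One more application of Fubini to `y = ∫₀^y dt` then gives
`∫₀ˣ F̄^(ν-1) dt = x F̄(x)^(ν-1) + (ν-1) ∫₀ˣ y F̄(y)^(ν-2) dF(y)`.
-/

open MeasureTheory ProbabilityTheory Set Function

theorem ProbabilityTheory.nullSingletonClass_of_continuous_cdf {μ : Measure ℝ}
    [IsProbabilityMeasure μ] (h : Continuous (cdf μ)) : NullSingletonClass μ where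
  measure_singleton a := by
    rw [← measure_cdf μ, StieltjesFunction.measure_singleton,
      h.continuousAt.continuousWithinAt.leftLim_eq, sub_self, ENNReal.ofReal_zero]

theorem integral_Ioc_integral_Ioc_eq_integral_Ioc_integral_Ioo {μ ν : Measure ℝ}
    [SFinite μ] [SFinite ν] {a b : ℝ} {f : ℝ → ℝ → ℝ}
    (hf : Integrable (uncurry f) ((μ.restrict (Ioc a b)).prod (ν.restrict (Ioc a b)))) :
    ∫ y in Ioc a b, ∫ z in Ioc y b, f y z ∂ν ∂μ =
      ∫ z in Ioc a b, ∫ y in Ioo a z, f y z ∂μ ∂ν := by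
  let g : ℝ → ℝ → ℝ := fun y z => {p : ℝ × ℝ | p.1 < p.2}.indicator (uncurry f) (y, z)
  have hg : Integrable (uncurry g) ((μ.restrict (Ioc a b)).prod (ν.restrict (Ioc a b))) :=
    hf.indicator (measurableSet_lt measurable_fst measurable_snd)
  calc ∫ y in Ioc a b, ∫ z in Ioc y b, f y z ∂ν ∂μ
      = ∫ y in Ioc a b, ∫ z in Ioc a b, g y z ∂ν ∂μ := by
        refine setIntegral_congr_fun measurableSet_Ioc fun y hy => ?_
        have : (fun z => g y z) = (Ioi y).indicator (f y) := by
          ext z; simp [g, indicator_apply]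
        rw [this, setIntegral_indicator measurableSet_Ioi, Ioc_inter_Ioi, sup_of_le_right hy.1.le]
    _ = ∫ z in Ioc a b, ∫ y in Ioc a b, g y z ∂μ ∂ν := integral_integral_swap hg
    _ = ∫ z in Ioc a b, ∫ y in Ioo a z, f y z ∂μ ∂ν := by
        refine setIntegral_congr_fun measurableSet_Ioc fun z hz => ?_
        have : (fun y => g y z) = (Iio z).indicator (fun y => f y z) := by
          ext y; simp [g, indicator_apply]
        have hset : Ioc a b ∩ Iio z = Ioo a z :=
          Set.ext fun y => ⟨fun h => ⟨h.1.1, h.2⟩, fun h => ⟨⟨h.1, h.2.le.trans hz.2⟩, h.2⟩⟩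
        rw [this, setIntegral_indicator measurableSet_Iio, hset]

namespace MeasureTheory.Measure

variable {μ : Measure ℝ} [IsFiniteMeasure μ]

theorem antitone_measureReal_Ioi : Antitone fun y => μ.real (Ioi y) :=
  fun _ _ hyz => measureReal_mono (Ioi_subset_Ioi hyz)

theorem integrable_measureReal_Ioi_pow {ν : Measure ℝ} [IsFiniteMeasure ν] (k : ℕ) :
    Integrable (fun y => μ.real (Ioi y) ^ k) ν :=
  .of_bound (antitone_measureReal_Ioi.measurable.pow_const k).aestronglyMeasurable (μ.real univ ^ k)
    (.of_forall fun y => by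
      rw [Real.norm_of_nonneg (by positivity)]
      exact pow_le_pow_left₀ measureReal_nonneg (measureReal_mono (subset_univ _)) k)

theorem measureReal_Ioi_sub_measureReal_Ioi {a b : ℝ} (hab : a ≤ b) :
    μ.real (Ioi a) - μ.real (Ioi b) = μ.real (Ioc a b) := by
  rw [← measureReal_sdiff (Ioi_subset_Ioi hab) measurableSet_Ioi, Ioi_sdiff_Ioi]

variable [NullSingletonClass μ]

theorem succ_mul_setIntegral_Ioc_measureReal_Ioi_pow (k : ℕ) {a b : ℝ} (hab : a ≤ b) :
    (k + 1) * ∫ y in Ioc a b, μ.real (Ioi y) ^ k ∂μ =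
      μ.real (Ioi a) ^ (k + 1) - μ.real (Ioi b) ^ (k + 1) := by
  induction k generalizing b with
  | zero =>
    simp [measureReal_Ioi_sub_measureReal_Ioi hab]
  | succ k ih =>
    set G := fun y => μ.real (Ioi y)
    have hint := fun j => integrable_measureReal_Ioi_pow (μ := μ) (ν := μ.restrict (Ioc a b)) j
    have hchain :
        (k + 1) * ((∫ y in Ioc a b, G y ^ (k + 1) ∂μ) - G b * ∫ y in Ioc a b, G y ^ k ∂μ) =
          G a ^ (k + 1) * (G a - G b) - ∫ y in Ioc a b, G y ^ (k + 1) ∂μ := by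
      calc (k + 1) * ((∫ y in Ioc a b, G y ^ (k + 1) ∂μ) - G b * ∫ y in Ioc a b, G y ^ k ∂μ)
          = (k + 1) * ∫ y in Ioc a b, ∫ _ in Ioc y b, G y ^ k ∂μ ∂μ := by
            rw [← integral_const_mul, ← integral_sub (hint _) ((hint k).const_mul _)]
            congr 1
            refine setIntegral_congr_fun measurableSet_Ioc fun y hy => ?_
            simp only [setIntegral_const, smul_eq_mul, G,
              ← measureReal_Ioi_sub_measureReal_Ioi hy.2]
            ring
        _ = (k + 1) * ∫ z in Ioc a b, (G a ^ (k + 1) - G z ^ (k + 1)) / (k + 1) ∂μ := by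
            rw [integral_Ioc_integral_Ioc_eq_integral_Ioc_integral_Ioo ((hint k).comp_fst _)]
            congr 1
            refine setIntegral_congr_fun measurableSet_Ioc fun z hz => ?_
            rw [← integral_Ioc_eq_integral_Ioo, eq_div_iff (by positivity), mul_comm, ih hz.1.le]
        _ = G a ^ (k + 1) * (G a - G b) - ∫ y in Ioc a b, G y ^ (k + 1) ∂μ := by
            rw [integral_div, integral_sub (integrable_const _) (hint _), setIntegral_const,
              smul_eq_mul, ← measureReal_Ioi_sub_measureReal_Ioi hab]
            field_simp
            ring
    push_cast
    linear_combination hchain + G b * ih hab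

theorem integral_Ioc_measureReal_Ioi_pow_succ (m : ℕ) {a b : ℝ} (hab : a ≤ b) :
    ∫ t in Ioc a b, μ.real (Ioi t) ^ (m + 1) =
      (b - a) * μ.real (Ioi b) ^ (m + 1) +
        (m + 1) * ∫ y in Ioc a b, (y - a) * μ.real (Ioi y) ^ m ∂μ := by
  set G := fun y => μ.real (Ioi y)
  have hm : (m + 1 : ℝ) ≠ 0 := by positivity
  have hfubini : ∫ y in Ioc a b, (y - a) * G y ^ m ∂μ =
      ∫ t in Ioc a b, (G t ^ (m + 1) - G b ^ (m + 1)) / (m + 1) := by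
    calc ∫ y in Ioc a b, (y - a) * G y ^ m ∂μ
        = ∫ y in Ioc a b, (∫ _ in Ioo a y, G y ^ m) ∂μ := by
          refine setIntegral_congr_fun measurableSet_Ioc fun y hy => ?_
          rw [setIntegral_const, smul_eq_mul, Real.volume_real_Ioo_of_le hy.1.le]
      _ = ∫ t in Ioc a b, ∫ y in Ioc t b, G y ^ m ∂μ := by
          rw [integral_Ioc_integral_Ioc_eq_integral_Ioc_integral_Ioo
            ((integrable_measureReal_Ioi_pow m).comp_snd _)]
      _ = ∫ t in Ioc a b, (G t ^ (m + 1) - G b ^ (m + 1)) / (m + 1) := by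
          refine setIntegral_congr_fun measurableSet_Ioc fun t ht => ?_
          rw [eq_div_iff hm, mul_comm, succ_mul_setIntegral_Ioc_measureReal_Ioi_pow m ht.2]
  rw [hfubini, integral_div, integral_sub (integrable_measureReal_Ioi_pow _) (integrable_const _),
    setIntegral_const, smul_eq_mul, Real.volume_real_Ioc_of_le hab]
  field_simp
  ring

end MeasureTheory.Measure

section LayerCake

variable {Ω : Type*} [MeasurableSpace Ω] {P : Measure Ω} [IsFiniteMeasure P] {Z : Ω → ℝ}
  (hZ : AEMeasurable Z P) (hZ0 : 0 ≤ᵐ[P] Z) {x : ℝ} (hx : 0 ≤ x)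
include hZ hZ0 hx

theorem integrable_const_min_of_nonneg : Integrable (fun ω => min x (Z ω)) P :=
  .of_bound (aemeasurable_const.min hZ).aestronglyMeasurable x <| hZ0.mono fun ω hω => by
    rw [Real.norm_of_nonneg (le_min hx hω)]
    exact min_le_left _ _

theorem integral_min_eq_setIntegral_Ioc_measureReal_lt :
    ∫ ω, min x (Z ω) ∂P = ∫ t in Ioc 0 x, P.real {ω | t < Z ω} := by
  have hlevel : (fun t => P.real {ω | t < min x (Z ω)}) =
      (Iio x).indicator fun t => P.real {ω | t < Z ω} := by
    ext t
    by_cases htx : t < x <;> simp [htx]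
  rw [(integrable_const_min_of_nonneg hZ hZ0 hx).integral_eq_integral_meas_lt
      (hZ0.mono fun ω hω => le_min hx hω), hlevel, setIntegral_indicator measurableSet_Iio,
    Ioi_inter_Iio, integral_Ioc_eq_integral_Ioo]

end LayerCake

namespace ProbabilityTheory

variable {Ω : Type*} [MeasurableSpace Ω] {P : Measure Ω}

theorem integral_finsetSum_of_identDistrib {ι : Type*} [Fintype ι] {Y : ι → Ω → ℝ} {X : Ω → ℝ}
    (hid : ∀ i, IdentDistrib (Y i) X P P) (hX : Integrable X P) :
    ∫ ω, ∑ i, Y i ω ∂P = Fintype.card ι * ∫ ω, X ω ∂P := by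
  rw [integral_finsetSum _ fun i _ => (hid i).integrable_iff.mpr hX]
  simp [fun i => (hid i).integral_eq]

variable {ι : Type*} [Fintype ι] {Y : ι → Ω → ℝ} (hY : iIndepFun Y P)
  (hmY : ∀ i, AEMeasurable (Y i) P) {μ : Measure ℝ} (hμ : ∀ i, P.map (Y i) = μ)
include hY hmY hμ

theorem iIndepFun.measureReal_lt_iInf [Nonempty ι] (t : ℝ) :
    P.real {ω | t < ⨅ i, Y i ω} = μ.real (Ioi t) ^ Fintype.card ι := by
  have hset : {ω | t < ⨅ i, Y i ω} = ⋂ i, Y i ⁻¹' Ioi t := by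
    ext ω
    simp only [mem_ofPred_eq, mem_iInter, mem_preimage, mem_Ioi]
    refine ⟨fun h i => h.trans_le (ciInf_le (Finite.bddBelow_range _) i), fun h => ?_⟩
    obtain ⟨j, hj⟩ := exists_eq_ciInf_of_finite (f := fun i => Y i ω)
    exact hj ▸ h j
  rw [measureReal_def, hset, hY.meas_iInter fun i => ⟨Ioi t, measurableSet_Ioi, rfl⟩]
  simp_rw [← Measure.map_apply_of_aemeasurable (hmY _) measurableSet_Ioi, hμ]
  rw [Finset.prod_const, Finset.card_univ, ENNReal.toReal_pow, measureReal_def]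

theorem iIndepFun.integral_min_iInf [IsFiniteMeasure P] [IsFiniteMeasure μ]
    [NullSingletonClass μ] {n : ℕ} (hcard : Fintype.card ι = n + 1) (hY0 : ∀ i ω, 0 ≤ Y i ω)
    {x : ℝ} (hx : 0 ≤ x) :
    ∫ ω, min x (⨅ i, Y i ω) ∂P =
      x * μ.real (Ioi x) ^ (n + 1) + (n + 1) * ∫ y in Ioc 0 x, y * μ.real (Ioi y) ^ n ∂μ := by
  have : Nonempty ι := Fintype.card_pos_iff.mp (by omega)
  rw [integral_min_eq_setIntegral_Ioc_measureReal_lt (AEMeasurable.iInf hmY)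
    (.of_forall fun ω => le_ciInf fun i => hY0 i ω) hx]
  simp_rw [hY.measureReal_lt_iInf hmY hμ, hcard]
  simpa using Measure.integral_Ioc_measureReal_Ioi_pow_succ n hx

end ProbabilityTheory

theorem kernel_first_projection_general {Ω : Type*} [MeasurableSpace Ω]
    (P : Measure Ω) [IsProbabilityMeasure P] (ν : ℕ) (hν : 2 ≤ ν)
    (X : Ω → ℝ) (Y : Fin (ν - 1) → Ω → ℝ)
    (hmX : Measurable X) (hm : ∀ i, Measurable (Y i))
    (hpos : ∀ i ω, 0 ≤ Y i ω)
    (hid : ∀ i, IdentDistrib (Y i) X P P)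
    (hindep : iIndepFun Y P)
    (hint : Integrable X P)
    (F : ℝ → ℝ) (hF : ∀ t, F t = (P.map X (Set.Iic t)).toReal)
    (hFcont : Continuous F)
    (x : ℝ) (hx : 0 ≤ x) :
    ∫ ω, ((x + ∑ i, Y i ω) - (ν : ℝ) * min x (⨅ i, Y i ω)) / (ν : ℝ) ∂P =
      (1 / (ν : ℝ)) *
          (x * (1 - (ν : ℝ) * (1 - F x) ^ (ν - 1)) -
            (ν : ℝ) * ((ν : ℝ) - 1) *
              ∫ y in Set.Icc 0 x, y * (1 - F y) ^ (ν - 2) ∂(P.map X)) +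
        (((ν : ℝ) - 1) / (ν : ℝ)) * ∫ ω, X ω ∂P := by
  obtain ⟨n, rfl⟩ : ∃ n, ν = n + 2 := ⟨ν - 2, by omega⟩
  set μ := P.map X
  have : IsProbabilityMeasure μ := Measure.isProbabilityMeasure_map hmX.aemeasurable
  have hFμ : F = cdf μ := funext fun t => by rw [hF, cdf_eq_real, measureReal_def]
  have : NullSingletonClass μ := nullSingletonClass_of_continuous_cdf (hFμ ▸ hFcont)
  have hsurv : ∀ t, 1 - F t = μ.real (Ioi t) := fun t => by
    rw [hF, ← measureReal_def, ← compl_Iic, probReal_compl_eq_one_sub measurableSet_Iic]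
  have hcard : Fintype.card (Fin (n + 2 - 1)) = n + 1 := by simp
  have : Nonempty (Fin (n + 2 - 1)) := ⟨⟨0, by omega⟩⟩
  have hintY : ∀ i, Integrable (Y i) P := fun i => (hid i).integrable_iff.mpr hint
  have hintS : Integrable (fun ω => x + ∑ i, Y i ω) P :=
    (integrable_const x).add (integrable_finsetSum _ fun i _ => hintY i)
  have hintM : Integrable (fun ω => min x (⨅ i, Y i ω)) P :=
    integrable_const_min_of_nonneg (AEMeasurable.iInf fun i => (hm i).aemeasurable)
      (.of_forall fun ω => le_ciInf fun i => hpos i ω) hx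
  rw [integral_div, integral_sub hintS (hintM.const_mul _), integral_add (integrable_const x)
    (integrable_finsetSum _ fun i _ => hintY i), integral_const, probReal_univ, one_smul,
    integral_finsetSum_of_identDistrib hid hint,
    integral_const_mul, hindep.integral_min_iInf (fun i => (hm i).aemeasurable)
    (fun i => (hid i).map_eq) hcard hpos hx, integral_Icc_eq_integral_Ioc, hcard]
  simp only [hsurv]
  push_cast
  field_simp
  ring

/-- For `X, X₂, …, X_ν` i.i.d. non-negative random variables with
continuous distribution function `F`, survival function `F̄ = 1 − F` and finite mean, and
kernel `h(y₁, …, y_ν) = (y₁ + ⋯ + y_ν − ν min(y₁, …, y_ν))/ν`, for every `x ≥ 0`: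
`E[h(x, X₂, …, X_ν)] = (1/ν)(x(1 − νF̄(x)^{ν−1}) − ν(ν−1)∫_0^x y F̄(y)^{ν−2} dF(y)) + ((ν−1)/ν) E(X)`. -/
theorem kernel_first_projection {Ω : Type*} [MeasurableSpace Ω]
    (P : Measure Ω) [IsProbabilityMeasure P] (ν : ℕ) (hν : 2 ≤ ν)
    (X : Ω → ℝ) (Y : Fin (ν - 1) → Ω → ℝ)
    (hmX : Measurable X) (hm : ∀ i, Measurable (Y i))
    (hposX : ∀ ω, 0 ≤ X ω) (hpos : ∀ i ω, 0 ≤ Y i ω)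
    (hid : ∀ i, IdentDistrib (Y i) X P P)
    (hindep : iIndepFun Y P)
    (hint : Integrable X P)
    (F : ℝ → ℝ) (hF : ∀ t, F t = (P.map X (Set.Iic t)).toReal)
    (hFcont : Continuous F)
    (x : ℝ) (hx : 0 ≤ x) :
    ∫ ω, ((x + ∑ i, Y i ω) - (ν : ℝ) * min x (⨅ i, Y i ω)) / (ν : ℝ) ∂P =
      (1 / (ν : ℝ)) *
          (x * (1 - (ν : ℝ) * (1 - F x) ^ (ν - 1)) -
            (ν : ℝ) * ((ν : ℝ) - 1) *
              ∫ y in Set.Icc 0 x, y * (1 - F y) ^ (ν - 2) ∂(P.map X)) +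
        (((ν : ℝ) - 1) / (ν : ℝ)) * ∫ ω, X ω ∂P :=
  kernel_first_projection_general P ν hν X Y hmX hm hpos hid hindep hint F hF hFcont x hx
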